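/- arXiv:1610.05346 — 2 statements merged into one kernel-verified Lean document; each statement's English description precedes it below -/
import Mathlib

section
/- Let D be the diagonal 3×3 matrix with entries ((1+N)^{-3/2}, (1+N)^{-1/2}, (1+N)^{-1/2}) for N ≥ 0, let O be an orthogonal 3×3 matrix, and for a fixed center (t_*, x_*, v_*) with N - 1/2 ≤ |v_*| ≤ N + 1/2, define the change of coordinates X = D^{-1} O^T (x - v_*(t - t_*)), X_* = D^{-1} O^T x_*, V = D^{-1} O^T (v - v_*). Set r_0 = (2+N)^{-m}, r_1 = (2+N)^{-2m/3 + 5/6} for m > 9. Then whenever (t,x,v) satisfies |t - t_*| ≤ r_0^2, |x - x_*| ≤ r_0^3, |v - v_*| ≤ r_0, the transformed point satisfies |t - t_*| ≤ r_1^2, |X - X_*| ≤ r_1^3, |V| ≤ r_1. -/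
/-!
`Oᵀ` is an isometry and every entry of `D⁻¹` is at most `(2+N)^{3/2}`, so `|V| ≤ (2+N)^{3/2} r₀`
and `|X - X_*| ≤ (2+N)^{3/2} (r₀³ + r₀² |v_*|) ≤ (2+N)^{5/2} r₀²`, which is exactly `r₁³`.
The time bound only needs `r₀ ≤ r₁`.
-/

noncomputable section

abbrev R3 := EuclideanSpace ℝ (Fin 3)

open Matrix
open scoped Matrix.Norms.L2Operator

theorem norm_toLp_diagonal_mulVec_transpose_mulVec_le {n : Type*} [Fintype n] [DecidableEq n]
    [Nonempty n] (d : n → ℝ) {O : Matrix n n ℝ} (hO : O * Oᵀ = 1) (w : EuclideanSpace ℝ n) :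
    ‖WithLp.toLp 2 (diagonal d *ᵥ (Oᵀ *ᵥ w))‖ ≤ ‖d‖ * ‖w‖ := by
  have hOt : Oᵀ ∈ unitary (Matrix n n ℝ) :=
    (mem_orthogonalGroup_iff' n ℝ).2 (by rwa [transpose_transpose])
  calc ‖WithLp.toLp 2 (diagonal d *ᵥ (Oᵀ *ᵥ w))‖ = ‖WithLp.toLp 2 ((diagonal d * Oᵀ) *ᵥ w)‖ := by
        rw [mulVec_mulVec]
    _ ≤ ‖diagonal d * Oᵀ‖ * ‖w‖ := l2_opNorm_mulVec _ w
    _ ≤ ‖diagonal d‖ * ‖Oᵀ‖ * ‖w‖ := by gcongr; exact l2_opNorm_mul _ _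
    _ = ‖d‖ * ‖w‖ := by rw [l2_opNorm_diagonal, CStarRing.norm_of_mem_unitary hOt, mul_one]

theorem norm_sub_sub_smul_le {E : Type*} [SeminormedAddCommGroup E] [NormedSpace ℝ E]
    {x x₀ v₀ : E} {t t₀ r : ℝ} (hx : ‖x - x₀‖ ≤ r ^ 3) (ht : |t - t₀| ≤ r ^ 2) :
    ‖x - x₀ - (t - t₀) • v₀‖ ≤ r ^ 2 * (r + ‖v₀‖) :=
  calc ‖x - x₀ - (t - t₀) • v₀‖ ≤ ‖x - x₀‖ + |t - t₀| * ‖v₀‖ := by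
        rw [← Real.norm_eq_abs, ← norm_smul]; exact norm_sub_le _ _
    _ ≤ r ^ 3 + r ^ 2 * ‖v₀‖ := by gcongr
    _ = r ^ 2 * (r + ‖v₀‖) := by ring

/-- The diagonal of `D⁻¹`, where `D = diag((1+N)^{-3/2}, (1+N)^{-1/2}, (1+N)^{-1/2})`. -/
def dilationInv (N : ℝ) : Fin 3 → ℝ :=
  fun i => if i = 0 then (1 + N) ^ ((3:ℝ)/2) else (1 + N) ^ ((1:ℝ)/2)

theorem norm_dilationInv_le {N : ℝ} (hN : 0 ≤ N) : ‖dilationInv N‖ ≤ (2 + N) ^ ((3:ℝ)/2) := by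
  refine (pi_norm_le_iff_of_nonneg (by positivity)).2 fun i => ?_
  have h1 : (1 + N) ^ ((3:ℝ)/2) ≤ (2 + N) ^ ((3:ℝ)/2) := by gcongr; linarith
  have h2 : (1 + N) ^ ((1:ℝ)/2) ≤ (1 + N) ^ ((3:ℝ)/2) :=
    Real.rpow_le_rpow_of_exponent_le (by linarith) (by norm_num)
  rw [Real.norm_of_nonneg (by unfold dilationInv; split_ifs <;> positivity)]
  unfold dilationInv
  split_ifs <;> linarith

theorem rpow_three_halves_mul_rpow_neg_le {A m : ℝ} (hA : 1 ≤ A) (hm : 2 ≤ m) :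
    A ^ ((3:ℝ)/2) * A ^ (-m) ≤ A ^ (-(2*m)/3 + 5/6) := by
  rw [← Real.rpow_add (by linarith)]
  exact Real.rpow_le_rpow_of_exponent_le hA (by linarith)

theorem rpow_three_halves_mul_rpow_neg_sq_mul_self {A : ℝ} (hA : 0 < A) (m : ℝ) :
    A ^ ((3:ℝ)/2) * ((A ^ (-m)) ^ 2 * A) = (A ^ (-(2*m)/3 + 5/6)) ^ 3 := by
  rw [← Real.rpow_mul_natCast hA.le, ← Real.rpow_mul_natCast hA.le,
    ← Real.rpow_add_one hA.ne', ← Real.rpow_add hA]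
  ring_nf

theorem stmt4_general (N m : ℝ) (hN : 0 ≤ N) (hm : 9 < m)
    (tstar t : ℝ) (xstar vstar x v : R3)
    (hvhi : ‖vstar‖ ≤ N + 1/2)
    (O : Matrix (Fin 3) (Fin 3) ℝ)
    (hO : O * O.transpose = 1)
    (h1 : |t - tstar| ≤ ((2 + N) ^ (-m)) ^ 2)
    (h2 : ‖x - xstar‖ ≤ ((2 + N) ^ (-m)) ^ 3)
    (h3 : ‖v - vstar‖ ≤ (2 + N) ^ (-m)) :
    let Dinv : Matrix (Fin 3) (Fin 3) ℝ :=
      Matrix.diagonal fun i => if i = 0 then (1 + N) ^ ((3:ℝ)/2) else (1 + N) ^ ((1:ℝ)/2)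
    let X : R3 := (WithLp.toLp 2 (Dinv.mulVec (O.transpose.mulVec (x - (t - tstar) • vstar))) : R3)
    let Xstar : R3 := (WithLp.toLp 2 (Dinv.mulVec (O.transpose.mulVec xstar)) : R3)
    let V : R3 := (WithLp.toLp 2 (Dinv.mulVec (O.transpose.mulVec (v - vstar))) : R3)
    let r1 : ℝ := (2 + N) ^ (-(2*m)/3 + 5/6)
    |t - tstar| ≤ r1 ^ 2 ∧ ‖X - Xstar‖ ≤ r1 ^ 3 ∧ ‖V‖ ≤ r1 := by
  intro Dinv X Xstar V r1
  set A := 2 + N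
  have hA : 1 ≤ A := by linarith
  have hr0 : A ^ (-m) ≤ 1 := Real.rpow_le_one_of_one_le_of_nonpos hA (by linarith)
  have hD (w : R3) : ‖WithLp.toLp 2 (Dinv *ᵥ (Oᵀ *ᵥ w))‖ ≤ A ^ ((3:ℝ)/2) * ‖w‖ :=
    (norm_toLp_diagonal_mulVec_transpose_mulVec_le (dilationInv N) hO w).trans
      (by gcongr; exact norm_dilationInv_le hN)
  have hX : X - Xstar = WithLp.toLp 2 (Dinv *ᵥ (Oᵀ *ᵥ (x - xstar - (t - tstar) • vstar))) := by
    simp only [X, Xstar, ← WithLp.toLp_sub, ← mulVec_sub]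
    congr 3
    abel
  refine ⟨h1.trans ?_, ?_, ?_⟩
  · gcongr
    exact Real.rpow_le_rpow_of_exponent_le hA (by linarith)
  · calc ‖X - Xstar‖ ≤ A ^ ((3:ℝ)/2) * ‖x - xstar - (t - tstar) • vstar‖ := hX ▸ hD _
      _ ≤ A ^ ((3:ℝ)/2) * ((A ^ (-m)) ^ 2 * (A ^ (-m) + ‖vstar‖)) := by
        gcongr; exact norm_sub_sub_smul_le h2 h1
      _ ≤ A ^ ((3:ℝ)/2) * ((A ^ (-m)) ^ 2 * A) := by gcongr; linarith
      _ = r1 ^ 3 := rpow_three_halves_mul_rpow_neg_sq_mul_self (by linarith) m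
  · calc ‖V‖ ≤ A ^ ((3:ℝ)/2) * ‖v - vstar‖ := hD _
      _ ≤ A ^ ((3:ℝ)/2) * A ^ (-m) := by gcongr
      _ ≤ r1 := rpow_three_halves_mul_rpow_neg_le hA (by linarith)

/-- Change of coordinates lemma: with `D = diag((1+N)^{-3/2},(1+N)^{-1/2},(1+N)^{-1/2})`,
`O` orthogonal, `X = D⁻¹ Oᵀ (x - v_*(t-t_*))`, `X_* = D⁻¹ Oᵀ x_*`,
`V = D⁻¹ Oᵀ (v - v_*)`, `r₀ = (2+N)^{-m}`, `r₁ = (2+N)^{-2m/3+5/6}`, `m > 9`: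
if `(t,x,v) ∈ Q_{r₀}(t_*,x_*,v_*)` then `(t,X,V) ∈ Q_{r₁}(t_*,X_*,0)`. -/
theorem stmt4 (N m : ℝ) (hN : 0 ≤ N) (hm : 9 < m)
    (tstar t : ℝ) (xstar vstar x v : R3)
    (hvlo : N - 1/2 ≤ ‖vstar‖) (hvhi : ‖vstar‖ ≤ N + 1/2)
    (O : Matrix (Fin 3) (Fin 3) ℝ)
    (hO : O * O.transpose = 1) (hO' : O.transpose * O = 1)
    (h1 : |t - tstar| ≤ ((2 + N) ^ (-m)) ^ 2)
    (h2 : ‖x - xstar‖ ≤ ((2 + N) ^ (-m)) ^ 3)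
    (h3 : ‖v - vstar‖ ≤ (2 + N) ^ (-m)) :
    let Dinv : Matrix (Fin 3) (Fin 3) ℝ :=
      Matrix.diagonal fun i => if i = 0 then (1 + N) ^ ((3:ℝ)/2) else (1 + N) ^ ((1:ℝ)/2)
    let X : R3 := (WithLp.toLp 2 (Dinv.mulVec (O.transpose.mulVec (x - (t - tstar) • vstar))) : R3)
    let Xstar : R3 := (WithLp.toLp 2 (Dinv.mulVec (O.transpose.mulVec xstar)) : R3)
    let V : R3 := (WithLp.toLp 2 (Dinv.mulVec (O.transpose.mulVec (v - vstar))) : R3)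
    let r1 : ℝ := (2 + N) ^ (-(2*m)/3 + 5/6)
    |t - tstar| ≤ r1 ^ 2 ∧ ‖X - Xstar‖ ≤ r1 ^ 3 ∧ ‖V‖ ≤ r1 :=
  stmt4_general N m hN hm tstar t xstar vstar x v hvhi O hO h1 h2 h3
end
end

section
/- Let h ∈ C^{1,1,2}([0,T] × T^3 × R^3) be periodic in x with M h ≤ 0 (the operator M as in the barrier lemma, with coefficient bounds |∂_i σ_G^{ij}| ≤ C(1+|v|)^{-2}, |σ_G^{ii}| ≤ C(1+|v|)^{-1}, |a_g| ≤ C(1+|v|)^{-1}, and σ_G positive semidefinite). Suppose additionally h is bounded above. Then sup_{[0,T]×T^3×R^3} h = sup_{x,v} h(0,x,v). -/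
open scoped BigOperators

noncomputable section

open scoped Topology

/-!
Fix `k > 26 C` and `λ > 0`, and let `G = h - λ e^{kt} (1 + |v|²)`. By periodicity in `x` and
compactness, `G` attains its maximum over `[0,T] × ℝ³ × closedBall 0 M`; since `h ≤ B` while the
barrier grows like `M²`, for large `M` this maximum is not on `|v| = M`. At a maximum with
`t > 0`, writing `c = λ e^{kt}`, we get `∂ₜh ≥ c k`, `∇ₓh = 0`, `∇ᵥh = 2 c v` and
`D²ᵥh ≤ 2 c I`. As `σ` is positive semidefinite, the last gives `σ : D²ᵥh ≤ 2 c tr σ`, and the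
decay of the coefficients bounds the velocity terms of `M h` by `26 c C`. So `M h > 0` there, a
contradiction; hence `G ≤ sup h(0,·,·)`, and `λ → 0` gives the claim.
-/

open scoped Matrix MatrixOrder in
theorem Matrix.PosSemidef.sum_mul_apply_nonpos {ι E : Type*} [Fintype ι]
    [NormedAddCommGroup E] [NormedSpace ℝ E] {S : Matrix ι ι ℝ} (hS : S.PosSemidef)
    (F : E →L[ℝ] E →L[ℝ] ℝ) (hF : ∀ w, F w w ≤ 0) (b : ι → E) :
    ∑ i, ∑ j, S i j * F (b i) (b j) ≤ 0 := by
  classical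
  set s := CFC.sqrt S
  have hs : s.PosSemidef := Matrix.nonneg_iff_posSemidef.mp (CFC.sqrt_nonneg S)
  have hS_eq : S = sᴴ * s := by
    rw [hs.1.eq]; exact (CFC.sqrt_mul_sqrt_self S hS.nonneg).symm
  calc ∑ i, ∑ j, S i j * F (b i) (b j)
      = ∑ k, F (∑ i, s k i • b i) (∑ j, s k j • b j) := by
        simp only [hS_eq, Matrix.mul_apply, Matrix.conjTranspose_apply, star_trivial, map_sum,
          map_smul, FunLike.coe_sum, Finset.sum_apply, FunLike.coe_smul, Pi.smul_apply,
          smul_eq_mul, Finset.sum_mul, Finset.mul_sum]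
        refine (Finset.sum_congr rfl fun i _ => Finset.sum_comm).trans ?_
        rw [Finset.sum_comm]
        refine Finset.sum_congr rfl fun k _ => ?_
        rw [Finset.sum_comm]
        exact Finset.sum_congr rfl fun j _ => Finset.sum_congr rfl fun i _ => by ring
    _ ≤ 0 := Finset.sum_nonpos fun k _ => hF _

section Calculus

theorem IsLocalMax.deriv_deriv_nonpos {f : ℝ → ℝ} {a : ℝ} (hmax : IsLocalMax f a)
    (hf : ContinuousAt f a) : deriv (deriv f) a ≤ 0 := by
  -- If `f'' a > 0`, the second derivative test makes `a` also a local minimum, so `f` is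
  -- locally constant and `f'' a = 0`.
  by_contra! hpos
  have hmin := isLocalMin_of_deriv_deriv_pos hpos hmax.deriv_eq_zero hf
  have hconst : f =ᶠ[𝓝 a] fun _ => f a := by
    filter_upwards [hmax, hmin] with x h1 h2 using le_antisymm h1 h2
  have hderiv : deriv f =ᶠ[𝓝 a] fun _ => 0 := by
    filter_upwards [hconst.eventuallyEq_nhds] with x hx
    rw [hx.deriv_eq, deriv_const]
  rw [hderiv.deriv_eq, deriv_const] at hpos
  exact lt_irrefl _ hpos

theorem IsMaxOn.deriv_nonneg_of_Icc {f : ℝ → ℝ} {a b : ℝ} (hab : a < b)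
    (hmax : IsMaxOn f (Set.Icc a b) b) (hf : DifferentiableAt ℝ f b) : 0 ≤ deriv f b := by
  have hcone : a - b ∈ posTangentConeAt (Set.Icc a b) b :=
    sub_mem_posTangentConeAt_of_segment_subset (by rw [segment_symm, segment_eq_Icc hab.le])
  have := hmax.localize.hasFDerivWithinAt_nonpos hf.hasDerivAt.hasFDerivAt.hasFDerivWithinAt hcone
  rw [ContinuousLinearMap.toSpanSingleton_apply, smul_eq_mul] at this
  nlinarith

theorem mul_exp_mul_le_deriv_of_isMaxOn {g : ℝ → ℝ} {a t₀ lam k q : ℝ} (ht₀ : a < t₀)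
    (hg : DifferentiableAt ℝ g t₀)
    (hmax : IsMaxOn (fun s => g s - lam * Real.exp (k * s) * q) (Set.Icc a t₀) t₀) :
    lam * Real.exp (k * t₀) * k * q ≤ deriv g t₀ := by
  have hφ : HasDerivAt (fun s => lam * Real.exp (k * s) * q)
      (lam * (Real.exp (k * t₀) * k) * q) t₀ := by
    simpa using (((hasDerivAt_id t₀).const_mul k).exp.const_mul lam).mul_const q
  have := hmax.deriv_nonneg_of_Icc ht₀ (hg.sub hφ.differentiableAt)
  rw [deriv_fun_sub hg hφ.differentiableAt, hφ.deriv] at this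
  linarith

variable {E : Type*} [NormedAddCommGroup E] [NormedSpace ℝ E]

theorem fderiv_fderiv_apply_eq {g : E → ℝ} (hg : ContDiff ℝ 2 g) (a w w' : E) :
    fderiv ℝ (fun v => fderiv ℝ g v w) a w' = fderiv ℝ (fderiv ℝ g) a w' w := by
  have hdg : DifferentiableAt ℝ (fderiv ℝ g) a :=
    (hg.fderiv_right (m := 1) (by norm_num)).differentiable one_ne_zero a
  rw [fderiv_clm_apply hdg (differentiableAt_const w)]
  simp

theorem IsLocalMax.fderiv_fderiv_apply_self_nonpos {g : E → ℝ} (hg : ContDiff ℝ 2 g) {a : E}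
    (hmax : IsLocalMax g a) (w : E) : fderiv ℝ (fderiv ℝ g) a w w ≤ 0 := by
  have hline : ∀ s : ℝ, HasDerivAt (fun s : ℝ => a + s • w) w s := fun s => by
    simpa using ((hasDerivAt_id s).smul_const w).const_add a
  have hdg : Differentiable ℝ (fderiv ℝ g) :=
    (hg.fderiv_right (m := 1) (by norm_num)).differentiable one_ne_zero
  have hderiv : deriv (fun s : ℝ => g (a + s • w)) = fun s => fderiv ℝ g (a + s • w) w :=
    funext fun s => ((hg.differentiable two_ne_zero _).hasFDerivAt.comp_hasDerivAt s
      (hline s)).deriv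
  have hderiv2 : HasDerivAt (fun s : ℝ => fderiv ℝ g (a + s • w) w)
      (fderiv ℝ (fderiv ℝ g) a w w) 0 := by
    have hd : DifferentiableAt ℝ (fun v => fderiv ℝ g v w) (a + (0:ℝ) • w) :=
      (hdg _).clm_apply (differentiableAt_const w)
    have := hd.hasFDerivAt.comp_hasDerivAt 0 (hline 0)
    rwa [zero_smul, add_zero, fderiv_fderiv_apply_eq hg] at this
  have hmax' : IsLocalMax (fun s : ℝ => g (a + s • w)) 0 := by
    have hmax0 : IsLocalMax g (a + (0:ℝ) • w) := by rwa [zero_smul, add_zero]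
    exact hmax0.comp_continuous (g := fun s : ℝ => a + s • w) (hline 0).continuousAt
  have := hmax'.deriv_deriv_nonpos (hg.continuous.continuousAt.comp (hline 0).continuousAt)
  rwa [hderiv, hderiv2.deriv] at this

variable {u φ : E → ℝ} {a : E}

theorem IsLocalMax.fderiv_eq_of_sub (hmax : IsLocalMax (fun w => u w - φ w) a)
    (hu : DifferentiableAt ℝ u a) (hφ : DifferentiableAt ℝ φ a) :
    fderiv ℝ u a = fderiv ℝ φ a := by
  have := hmax.fderiv_eq_zero
  rwa [fderiv_fun_sub hu hφ, sub_eq_zero] at this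

theorem IsLocalMax.fderiv_fderiv_apply_self_le_of_sub
    (hmax : IsLocalMax (fun w => u w - φ w) a) (hu : ContDiff ℝ 2 u) (hφ : ContDiff ℝ 2 φ)
    (w : E) : fderiv ℝ (fderiv ℝ u) a w w ≤ fderiv ℝ (fderiv ℝ φ) a w w := by
  have hdu : Differentiable ℝ (fderiv ℝ u) :=
    (hu.fderiv_right (m := 1) (by norm_num)).differentiable one_ne_zero
  have hdφ : Differentiable ℝ (fderiv ℝ φ) :=
    (hφ.fderiv_right (m := 1) (by norm_num)).differentiable one_ne_zero
  have hsub : fderiv ℝ (fun w => u w - φ w) = fun w => fderiv ℝ u w - fderiv ℝ φ w :=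
    funext fun w => fderiv_fun_sub (hu.differentiable two_ne_zero w)
      (hφ.differentiable two_ne_zero w)
  have := hmax.fderiv_fderiv_apply_self_nonpos (hu.sub hφ) w
  rw [hsub, fderiv_fun_sub (hdu a) (hdφ a)] at this
  simpa [sub_nonpos] using this

end Calculus

section Barrier

variable {F : Type*} [NormedAddCommGroup F] [InnerProductSpace ℝ F]

theorem hasFDerivAt_const_mul_one_add_norm_sq (c : ℝ) (v : F) :
    HasFDerivAt (fun w : F => c * (1 + ‖w‖ ^ 2)) ((2 * c) • innerSL ℝ v) v := by
  refine (((hasStrictFDerivAt_norm_sq v).hasFDerivAt.const_add 1).const_mul c).congr_fderiv ?_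
  ext w
  simp only [smul_apply, smul_eq_mul, nsmul_eq_mul]
  push_cast
  ring

theorem fderiv_fderiv_const_mul_one_add_norm_sq_apply (c : ℝ) (v w w' : F) :
    fderiv ℝ (fderiv ℝ fun w : F => c * (1 + ‖w‖ ^ 2)) v w w' = 2 * c * inner ℝ w w' := by
  have : fderiv ℝ (fun w : F => c * (1 + ‖w‖ ^ 2)) = (2 * c) • innerSL ℝ :=
    funext fun w => (hasFDerivAt_const_mul_one_add_norm_sq c w).fderiv
  rw [this, ((2 * c) • innerSL ℝ : F →L[ℝ] F →L[ℝ] ℝ).fderiv]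
  rfl

end Barrier

theorem mul_le_of_abs_le_mul_one_add_rpow {X y C r p : ℝ} (hp : 1 ≤ p)
    (hX : |X| ≤ C * (1 + r) ^ (-p)) (hy : |y| ≤ r) : X * y ≤ C := by
  have hr : 0 ≤ r := (abs_nonneg y).trans hy
  have hρ : 0 < (1 + r) ^ (-p) := Real.rpow_pos_of_pos (by linarith) _
  have hC : 0 ≤ C := nonneg_of_mul_nonneg_left ((abs_nonneg X).trans hX) hρ
  have hρr : (1 + r) ^ (-p) * r ≤ 1 := by
    have hle : (1 + r) ^ (-p) ≤ (1 + r) ^ (-1 : ℝ) :=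
      Real.rpow_le_rpow_of_exponent_le (by linarith) (by linarith)
    rw [Real.rpow_neg_one] at hle
    calc (1 + r) ^ (-p) * r ≤ (1 + r)⁻¹ * r := by gcongr
      _ ≤ 1 := by rw [inv_mul_le_iff₀ (by linarith)]; linarith
  calc X * y ≤ |X| * |y| := (le_abs_self _).trans (abs_mul X y).le
    _ ≤ C * (1 + r) ^ (-p) * r := by gcongr
    _ ≤ C := by rw [mul_assoc]; exact mul_le_of_le_one_right hC hρr

theorem le_of_abs_le_mul_one_add_rpow {X C r p : ℝ} (hp : 0 ≤ p) (hr : 0 ≤ r)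
    (hX : |X| ≤ C * (1 + r) ^ (-p)) : X ≤ C := by
  have hρ : 0 < (1 + r) ^ (-p) := Real.rpow_pos_of_pos (by linarith) _
  have hC : 0 ≤ C := nonneg_of_mul_nonneg_left ((abs_nonneg X).trans hX) hρ
  have hρ1 : (1 + r) ^ (-p) ≤ 1 :=
    Real.rpow_le_one_of_one_le_of_nonpos (by linarith) (by linarith)
  calc X ≤ |X| := le_abs_self X
    _ ≤ C * (1 + r) ^ (-p) := hX
    _ ≤ C := mul_le_of_le_one_right hC hρ1

theorem inner_le_of_norm_le_mul_one_add_rpow {F : Type*} [NormedAddCommGroup F]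
    [InnerProductSpace ℝ F] {A v : F} {C : ℝ} (hA : ‖A‖ ≤ C * (1 + ‖v‖) ^ (-1 : ℝ)) :
    inner ℝ A v ≤ C :=
  (real_inner_le_norm A v).trans
    (mul_le_of_abs_le_mul_one_add_rpow le_rfl (by rwa [abs_norm]) (abs_norm v).le)

section Divergence

variable {ι : Type*} [Fintype ι] [DecidableEq ι]

/-- `∇ · (S ∇u)` at `v`. -/
def divMatrixGrad (S : EuclideanSpace ℝ ι → Matrix ι ι ℝ) (u : EuclideanSpace ℝ ι → ℝ)
    (v : EuclideanSpace ℝ ι) : ℝ :=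
  ∑ i, fderiv ℝ (fun w => ∑ j, S w i j * fderiv ℝ u w (EuclideanSpace.single j 1)) v
    (EuclideanSpace.single i 1)

theorem divMatrixGrad_eq {S : EuclideanSpace ℝ ι → Matrix ι ι ℝ} {u : EuclideanSpace ℝ ι → ℝ}
    {v : EuclideanSpace ℝ ι} (hu : ContDiff ℝ 2 u)
    (hS : ∀ i j, DifferentiableAt ℝ (fun w => S w i j) v) :
    divMatrixGrad S u v = ∑ i, ∑ j,
      (fderiv ℝ (fun w => S w i j) v (EuclideanSpace.single i 1)
          * fderiv ℝ u v (EuclideanSpace.single j 1)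
        + S v i j
          * fderiv ℝ (fderiv ℝ u) v (EuclideanSpace.single i 1) (EuclideanSpace.single j 1)) := by
  have hdu : ∀ j, DifferentiableAt ℝ (fun w => fderiv ℝ u w (EuclideanSpace.single j 1)) v :=
    fun j => ((hu.fderiv_right (m := 1) (by norm_num)).differentiable one_ne_zero v).clm_apply
      (differentiableAt_const _)
  refine Finset.sum_congr rfl fun i _ => ?_
  rw [fderiv_fun_sum fun j _ => (hS i j).fun_mul (hdu j), sum_apply]
  refine Finset.sum_congr rfl fun j _ => ?_
  rw [fderiv_fun_mul (hS i j) (hdu j)]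
  simp only [add_apply, smul_apply, smul_eq_mul]
  rw [fderiv_fderiv_apply_eq hu]
  ring

theorem sum_mul_fderiv_fderiv_le_of_isLocalMax {u : EuclideanSpace ℝ ι → ℝ}
    {v : EuclideanSpace ℝ ι} {c : ℝ} (hu : ContDiff ℝ 2 u)
    (hmax : IsLocalMax (fun w => u w - c * (1 + ‖w‖ ^ 2)) v) {S : Matrix ι ι ℝ}
    (hS : S.PosSemidef) :
    ∑ i, ∑ j, S i j
        * fderiv ℝ (fderiv ℝ u) v (EuclideanSpace.single i 1) (EuclideanSpace.single j 1)
      ≤ 2 * c * ∑ i, S i i := by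
  set φ : EuclideanSpace ℝ ι → ℝ := fun w => c * (1 + ‖w‖ ^ 2)
  set F := fderiv ℝ (fderiv ℝ u) v - fderiv ℝ (fderiv ℝ φ) v
  have hF : ∀ w, F w w ≤ 0 := fun w => by
    simpa [F] using hmax.fderiv_fderiv_apply_self_le_of_sub hu
      (contDiff_const.mul (contDiff_const.add (contDiff_norm_sq ℝ))) w
  have hsplit : ∑ i, ∑ j, S i j
        * fderiv ℝ (fderiv ℝ u) v (EuclideanSpace.single i 1) (EuclideanSpace.single j 1)
      = ∑ i, ∑ j, S i j * F (EuclideanSpace.single i 1) (EuclideanSpace.single j 1)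
        + 2 * c * ∑ i, S i i := by
    simp only [F, φ, sub_apply, fderiv_fderiv_const_mul_one_add_norm_sq_apply,
      EuclideanSpace.inner_single_left, Real.ringHom_apply, PiLp.single_apply, mul_ite, mul_one,
      mul_zero, mul_sub, Finset.sum_sub_distrib, Finset.sum_ite_eq, Finset.mem_univ,
      ↓reduceIte, Finset.mul_sum]
    simp only [mul_comm (2 * c)]
    ring
  rw [hsplit]
  linarith [hS.sum_mul_apply_nonpos F hF fun i => EuclideanSpace.single i 1]

theorem fderiv_apply_single_eq_of_isLocalMax {u : EuclideanSpace ℝ ι → ℝ}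
    {v : EuclideanSpace ℝ ι} {c : ℝ} (hu : DifferentiableAt ℝ u v)
    (hmax : IsLocalMax (fun w => u w - c * (1 + ‖w‖ ^ 2)) v) (j : ι) :
    fderiv ℝ u v (EuclideanSpace.single j 1) = 2 * c * v j := by
  rw [hmax.fderiv_eq_of_sub hu (hasFDerivAt_const_mul_one_add_norm_sq c v).differentiableAt,
    (hasFDerivAt_const_mul_one_add_norm_sq c v).fderiv]
  simp [EuclideanSpace.inner_single_right]

end Divergence

section Periodic

variable {ι : Type*}

def periodCell : Set (EuclideanSpace ℝ ι) :=
  (WithLp.equiv 2 (ι → ℝ)).symm '' Set.univ.pi fun _ => Set.Icc 0 (2 * Real.pi)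

theorem isCompact_periodCell : IsCompact (periodCell (ι := ι)) :=
  (isCompact_univ_pi fun _ => isCompact_Icc).image (PiLp.continuous_toLp _ _)

theorem exists_mem_periodCell_add (x : EuclideanSpace ℝ ι) :
    ∃ y ∈ periodCell, ∃ k : ι → ℤ,
      x = y + (WithLp.equiv 2 (ι → ℝ)).symm (fun i => 2 * Real.pi * (k i : ℝ)) := by
  refine ⟨_, ⟨fun i => toIcoMod Real.two_pi_pos 0 (x i),
    fun i _ => Set.Ico_subset_Icc_self (toIcoMod_mem_Ico' _ _), rfl⟩,
    fun i => toIcoDiv Real.two_pi_pos 0 (x i), ?_⟩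
  ext i
  simp [mul_comm (2 * Real.pi), toIcoMod_add_toIcoDiv_mul]

theorem exists_isMaxOn_of_periodic {α β : Type*} [TopologicalSpace α] [TopologicalSpace β]
    {f : α × EuclideanSpace ℝ ι × β → ℝ} (hf : Continuous f)
    (hper : ∀ t x v (k : ι → ℤ),
      f (t, x + (WithLp.equiv 2 (ι → ℝ)).symm (fun i => 2 * Real.pi * (k i : ℝ)), v)
        = f (t, x, v))
    {K : Set α} {L : Set β} (hK : IsCompact K) (hL : IsCompact L) (hKne : K.Nonempty)
    (hLne : L.Nonempty) :
    ∃ p ∈ K ×ˢ Set.univ ×ˢ L, IsMaxOn f (K ×ˢ Set.univ ×ˢ L) p := by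
  obtain ⟨t, ht⟩ := hKne
  obtain ⟨v, hv⟩ := hLne
  obtain ⟨p, hp, hmax⟩ := (hK.prod (isCompact_periodCell.prod hL)).exists_isMaxOn
    ⟨(t, _, v), ht, ⟨0, fun i _ => by simp [Real.pi_pos.le], rfl⟩, hv⟩ hf.continuousOn
  refine ⟨p, ⟨hp.1, Set.mem_univ _, hp.2.2⟩, ?_⟩
  rintro ⟨t', x', v'⟩ ⟨ht', -, hv'⟩
  obtain ⟨y, hy, k, rfl⟩ := exists_mem_periodCell_add x'
  show f _ ≤ f p
  rw [hper]
  exact hmax ⟨ht', hy, hv'⟩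

end Periodic

section Kinetic

theorem divMatrixGrad_le_of_isLocalMax {u : R3 → ℝ} {S : R3 → Matrix (Fin 3) (Fin 3) ℝ}
    {v : R3} {c C : ℝ} (hc : 0 ≤ c) (hu : ContDiff ℝ 2 u)
    (hS : ∀ i j, DifferentiableAt ℝ (fun w => S w i j) v) (hSpsd : (S v).PosSemidef)
    (hSd : ∀ i j, |fderiv ℝ (fun w => S w i j) v (EuclideanSpace.single i 1)|
      ≤ C * (1 + ‖v‖) ^ (-2 : ℝ))
    (hSdiag : ∀ i, |S v i i| ≤ C * (1 + ‖v‖) ^ (-1 : ℝ))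
    (hmax : IsLocalMax (fun w => u w - c * (1 + ‖w‖ ^ 2)) v) :
    divMatrixGrad S u v ≤ 24 * c * C := by
  have hgrad := fderiv_apply_single_eq_of_isLocalMax (hu.differentiable two_ne_zero v) hmax
  have hfirst : ∀ i j, fderiv ℝ (fun w => S w i j) v (EuclideanSpace.single i 1)
      * fderiv ℝ u v (EuclideanSpace.single j 1) ≤ 2 * c * C := fun i j => by
    have hvj : |v j| ≤ ‖v‖ := by simpa using PiLp.norm_apply_le v j
    have := mul_le_mul_of_nonneg_left
      (mul_le_of_abs_le_mul_one_add_rpow one_le_two (hSd i j) hvj) (by positivity : 0 ≤ 2 * c)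
    rw [hgrad]
    linarith
  have hdiag : ∑ i, S v i i ≤ 3 * C := by
    calc ∑ i, S v i i ≤ ∑ _i : Fin 3, C := Finset.sum_le_sum fun i _ =>
          le_of_abs_le_mul_one_add_rpow zero_le_one (norm_nonneg v) (hSdiag i)
      _ = 3 * C := by simp
  rw [divMatrixGrad_eq hu hS]
  simp only [Finset.sum_add_distrib]
  have h1 := Finset.sum_le_sum fun i (_ : i ∈ Finset.univ) =>
    Finset.sum_le_sum fun j (_ : j ∈ Finset.univ) => hfirst i j
  have h2 := sum_mul_fderiv_fderiv_le_of_isLocalMax hu hmax hSpsd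
  have h3 := mul_le_mul_of_nonneg_left hdiag (by positivity : 0 ≤ 2 * c)
  simp only [Finset.sum_const, Finset.card_univ, Fintype.card_fin, nsmul_eq_mul,
    Nat.cast_ofNat] at h1
  linarith

/-- The operator `M` of the statement. -/
def kineticOp (h : ℝ → R3 → R3 → ℝ) (σ : ℝ → R3 → R3 → Matrix (Fin 3) (Fin 3) ℝ)
    (a : ℝ → R3 → R3 → R3) (t : ℝ) (x v : R3) : ℝ :=
  deriv (fun s => h s x v) t
    + ∑ i : Fin 3, v i * fderiv ℝ (fun y => h t y v) x (EuclideanSpace.single i 1)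
    - divMatrixGrad (σ t x) (h t x) v
    - ∑ j : Fin 3, a t x v j * fderiv ℝ (h t x) v (EuclideanSpace.single j 1)

theorem kineticOp_pos_of_isMax {h : ℝ → R3 → R3 → ℝ}
    {σ : ℝ → R3 → R3 → Matrix (Fin 3) (Fin 3) ℝ} {a : ℝ → R3 → R3 → R3}
    {C k lam t₀ : ℝ} {x₀ v₀ : R3} (hC : 0 ≤ C) (hk : 26 * C < k) (hlam : 0 < lam)
    (ht₀ : 0 < t₀) (ht : DifferentiableAt ℝ (fun s => h s x₀ v₀) t₀)
    (hv : ContDiff ℝ 2 (h t₀ x₀))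
    (hσdiff : ∀ i j, DifferentiableAt ℝ (fun w => σ t₀ x₀ w i j) v₀)
    (hσpsd : (σ t₀ x₀ v₀).PosSemidef)
    (hσd : ∀ i j, |fderiv ℝ (fun w => σ t₀ x₀ w i j) v₀ (EuclideanSpace.single i 1)|
      ≤ C * (1 + ‖v₀‖) ^ (-2 : ℝ))
    (hσdiag : ∀ i, |σ t₀ x₀ v₀ i i| ≤ C * (1 + ‖v₀‖) ^ (-1 : ℝ))
    (ha : ‖a t₀ x₀ v₀‖ ≤ C * (1 + ‖v₀‖) ^ (-1 : ℝ))
    (hmax_t : IsMaxOn (fun s => h s x₀ v₀ - lam * Real.exp (k * s) * (1 + ‖v₀‖ ^ 2))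
      (Set.Icc 0 t₀) t₀)
    (hmax_x : IsLocalMax (fun y => h t₀ y v₀) x₀)
    (hmax_v : IsLocalMax (fun w => h t₀ x₀ w - lam * Real.exp (k * t₀) * (1 + ‖w‖ ^ 2)) v₀) :
    0 < kineticOp h σ a t₀ x₀ v₀ := by
  set c := lam * Real.exp (k * t₀)
  have hc : 0 < c := by positivity
  have htime : c * k ≤ deriv (fun s => h s x₀ v₀) t₀ := by
    have := mul_exp_mul_le_deriv_of_isMaxOn ht₀ ht hmax_t
    have hk₀ : 0 ≤ k := by linarith
    nlinarith [mul_nonneg (mul_nonneg hc.le hk₀) (sq_nonneg ‖v₀‖)]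
  have htransport :
      ∑ i : Fin 3, v₀ i * fderiv ℝ (fun y => h t₀ y v₀) x₀ (EuclideanSpace.single i 1) = 0 := by
    simp [hmax_x.fderiv_eq_zero]
  have hdiffusion := divMatrixGrad_le_of_isLocalMax hc.le hv hσdiff hσpsd hσd hσdiag hmax_v
  have hdrift : ∑ j : Fin 3, a t₀ x₀ v₀ j * fderiv ℝ (h t₀ x₀) v₀ (EuclideanSpace.single j 1)
      ≤ 2 * c * C := by
    simp_rw [fderiv_apply_single_eq_of_isLocalMax (hv.differentiable two_ne_zero v₀) hmax_v]
    calc ∑ j : Fin 3, a t₀ x₀ v₀ j * (2 * c * v₀ j) = 2 * c * inner ℝ (a t₀ x₀ v₀) v₀ := by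
          simp only [PiLp.inner_apply, RCLike.inner_apply, conj_trivial, Finset.mul_sum]
          exact Finset.sum_congr rfl fun j _ => by ring
      _ ≤ 2 * c * C := by gcongr; exact inner_le_of_norm_le_mul_one_add_rpow ha
  have := mul_lt_mul_of_pos_left hk hc
  rw [kineticOp]
  linarith

theorem exists_ge_sub_mul_one_add_sq_lt {B g lam r : ℝ} (hlam : 0 < lam) :
    ∃ M, r ≤ M ∧ B - lam * (1 + M ^ 2) < g := by
  have : Filter.Tendsto (fun M : ℝ => lam * (1 + M ^ 2)) Filter.atTop Filter.atTop :=
    (Filter.tendsto_atTop_add_const_left _ 1 (Filter.tendsto_pow_atTop two_ne_zero)).const_mul_atTop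
      hlam
  obtain ⟨M, hM, hMg⟩ :=
    ((Filter.eventually_ge_atTop r).and (this.eventually_gt_atTop (B - g))).exists
  exact ⟨M, hM, by linarith⟩

theorem sub_barrier_le_sSup_initial {T C B k lam : ℝ} (hC : 0 ≤ C) (hk : 26 * C < k)
    (hlam : 0 < lam) {h : ℝ → R3 → R3 → ℝ} {σ : ℝ → R3 → R3 → Matrix (Fin 3) (Fin 3) ℝ}
    {a : ℝ → R3 → R3 → R3}
    (hreg1 : ContDiff ℝ 1 (fun p : ℝ × R3 × R3 => h p.1 p.2.1 p.2.2))
    (hreg2 : ∀ t x, ContDiff ℝ 2 (fun v => h t x v))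
    (hper : ∀ (t : ℝ) (x v : R3) (k : Fin 3 → ℤ),
      h t (x + (WithLp.equiv 2 (Fin 3 → ℝ)).symm (fun i => (2 * Real.pi) * (k i : ℝ))) v
        = h t x v)
    (hσdiff : ∀ (t : ℝ) (x : R3) (i j : Fin 3), Differentiable ℝ fun v : R3 => σ t x v i j)
    (hσpsd : ∀ t x v, (σ t x v).PosSemidef)
    (hσd : ∀ (t : ℝ) (x v : R3) (i j : Fin 3),
      |fderiv ℝ (fun w : R3 => σ t x w i j) v (EuclideanSpace.single i 1)|
        ≤ C * (1 + ‖v‖) ^ (-2:ℝ))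
    (hσdiag : ∀ (t : ℝ) (x v : R3) (i : Fin 3), |σ t x v i i| ≤ C * (1 + ‖v‖) ^ (-1:ℝ))
    (ha : ∀ (t : ℝ) (x v : R3), ‖a t x v‖ ≤ C * (1 + ‖v‖) ^ (-1:ℝ))
    (hbdd : ∀ t ∈ Set.Icc (0:ℝ) T, ∀ (x v : R3), h t x v ≤ B)
    (hsub : ∀ t ∈ Set.Icc (0:ℝ) T, ∀ (x v : R3), kineticOp h σ a t x v ≤ 0) :
    ∀ t ∈ Set.Icc 0 T, ∀ x v : R3,
      h t x v - lam * Real.exp (k * t) * (1 + ‖v‖ ^ 2) ≤ sSup {y | ∃ x v : R3, y = h 0 x v} := by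
  intro t ht x v
  set G : ℝ × R3 × R3 → ℝ :=
    fun p => h p.1 p.2.1 p.2.2 - lam * Real.exp (k * p.1) * (1 + ‖p.2.2‖ ^ 2)
  by_contra! hgt
  obtain ⟨M, hvM, hM⟩ := exists_ge_sub_mul_one_add_sq_lt (B := B) (g := G (t, x, v)) hlam
  have hGper : ∀ t x v (k : Fin 3 → ℤ),
      G (t, x + (WithLp.equiv 2 (Fin 3 → ℝ)).symm (fun i => 2 * Real.pi * (k i : ℝ)), v)
        = G (t, x, v) := fun t x v k => by simp only [G, hper]
  have hGc : Continuous G := hreg1.continuous.sub (by fun_prop)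
  obtain ⟨⟨t₀, x₀, v₀⟩, ⟨ht₀, -, hv₀⟩, hmax⟩ :=
    exists_isMaxOn_of_periodic hGc hGper isCompact_Icc
      (isCompact_closedBall 0 M) ⟨t, ht⟩ ⟨v, by simpa using hvM⟩
  have hG : G (t, x, v) ≤ G (t₀, x₀, v₀) := hmax ⟨ht, trivial, by simpa using hvM⟩
  have hv₀M : ‖v₀‖ < M := by
    refine lt_of_le_of_ne (by simpa using hv₀) fun hM₀ => ?_
    have hexp : 1 ≤ Real.exp (k * t₀) := Real.one_le_exp (mul_nonneg (by linarith) ht₀.1)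
    have : G (t₀, x₀, v₀) ≤ B - lam * (1 + M ^ 2) := by
      simp only [G, hM₀]
      nlinarith [hbdd t₀ ht₀ x₀ v₀,
        mul_le_mul_of_nonneg_left hexp (by positivity : 0 ≤ lam * (1 + M ^ 2))]
    linarith
  rcases ht₀.1.eq_or_lt with rfl | ht₀pos
  · have hS0 : BddAbove {y | ∃ x v : R3, y = h 0 x v} :=
      ⟨B, by rintro _ ⟨x, v, rfl⟩; exact hbdd 0 ht₀ x v⟩
    have := le_csSup hS0 ⟨x₀, v₀, rfl⟩
    have : 0 ≤ lam * Real.exp (k * 0) * (1 + ‖v₀‖ ^ 2) := by positivity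
    simp only [G] at hG
    linarith
  · refine (kineticOp_pos_of_isMax hC hk hlam ht₀pos ?_ (hreg2 t₀ x₀)
      (fun i j => hσdiff t₀ x₀ i j v₀) (hσpsd t₀ x₀ v₀) (hσd t₀ x₀ v₀) (hσdiag t₀ x₀ v₀)
      (ha t₀ x₀ v₀) ?_ ?_ ?_).not_ge (hsub t₀ ht₀ x₀ v₀)
    · exact (hreg1.differentiable one_ne_zero _).comp t₀
        (differentiableAt_id.prodMk (differentiableAt_const (x₀, v₀)))
    · exact fun s hs => hmax (a := (s, x₀, v₀)) ⟨⟨hs.1, hs.2.trans ht₀.2⟩, trivial, hv₀⟩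
    · refine Filter.Eventually.of_forall fun y => ?_
      have := hmax (a := (t₀, y, v₀)) ⟨ht₀, trivial, hv₀⟩
      simp only [G, Set.mem_ofPred_eq] at this
      linarith
    · filter_upwards [Metric.closedBall_mem_nhds_of_mem (mem_ball_zero_iff.mpr hv₀M)] with w hw
      exact hmax (a := (t₀, x₀, w)) ⟨ht₀, trivial, hw⟩

end Kinetic

/-- Global maximum principle: if `h` is `C^{1,1,2}`, periodic in `x`, bounded
above, and satisfies `M h ≤ 0` on `[0,T] × T³ × ℝ³` for the divergence-form
operator `M h = ∂_t h + v·∇_x h - ∇_v·(σ_G ∇_v h) - a_g·∇_v h` with `σ_G`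
positive semidefinite and the coefficient bounds `|∂_i σ_G^{ij}| ≤ C(1+|v|)^{-2}`,
`|σ_G^{ii}| ≤ C(1+|v|)^{-1}`, `|a_g| ≤ C(1+|v|)^{-1}`, then
`sup_{[0,T]×T³×ℝ³} h = sup_{x,v} h(0,x,v)`. -/
theorem stmt14 (T C B : ℝ) (hT : 0 < T) (hC : 0 < C)
    (h : ℝ → R3 → R3 → ℝ)
    (σ : ℝ → R3 → R3 → Matrix (Fin 3) (Fin 3) ℝ)
    (a : ℝ → R3 → R3 → R3)
    (hreg1 : ContDiff ℝ 1 (fun p : ℝ × R3 × R3 => h p.1 p.2.1 p.2.2))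
    (hreg2 : ∀ t x, ContDiff ℝ 2 (fun v => h t x v))
    (hper : ∀ (t : ℝ) (x v : R3) (k : Fin 3 → ℤ),
      h t (x + (WithLp.equiv 2 (Fin 3 → ℝ)).symm (fun i => (2 * Real.pi) * (k i : ℝ))) v
        = h t x v)
    (hσdiff : ∀ (t : ℝ) (x : R3) (i j : Fin 3), Differentiable ℝ fun v : R3 => σ t x v i j)
    (hσpsd : ∀ t x v, (σ t x v).PosSemidef)
    (hσd : ∀ (t : ℝ) (x v : R3) (i j : Fin 3),
      |fderiv ℝ (fun w : R3 => σ t x w i j) v (EuclideanSpace.single i 1)|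
        ≤ C * (1 + ‖v‖) ^ (-2:ℝ))
    (hσdiag : ∀ (t : ℝ) (x v : R3) (i : Fin 3), |σ t x v i i| ≤ C * (1 + ‖v‖) ^ (-1:ℝ))
    (ha : ∀ (t : ℝ) (x v : R3), ‖a t x v‖ ≤ C * (1 + ‖v‖) ^ (-1:ℝ))
    (hbdd : ∀ t ∈ Set.Icc (0:ℝ) T, ∀ (x v : R3), h t x v ≤ B)
    (hsub : ∀ t ∈ Set.Icc (0:ℝ) T, ∀ (x v : R3),
      deriv (fun s => h s x v) t
        + ∑ i : Fin 3, v i * fderiv ℝ (fun y => h t y v) x (EuclideanSpace.single i 1)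
        - ∑ i : Fin 3, fderiv ℝ (fun w : R3 => ∑ j : Fin 3, σ t x w i j *
              fderiv ℝ (fun u => h t x u) w (EuclideanSpace.single j 1)) v
            (EuclideanSpace.single i 1)
        - ∑ j : Fin 3, a t x v j *
            fderiv ℝ (fun u => h t x u) v (EuclideanSpace.single j 1) ≤ 0) :
    sSup {y : ℝ | ∃ t ∈ Set.Icc (0:ℝ) T, ∃ x v : R3, y = h t x v}
      = sSup {y : ℝ | ∃ x v : R3, y = h 0 x v} := by
  have h0T : (0 : ℝ) ∈ Set.Icc 0 T := ⟨le_rfl, hT.le⟩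
  have hbarrier := fun lam (hlam : 0 < lam) => sub_barrier_le_sSup_initial hC.le
    (lt_add_one (26 * C)) hlam hreg1 hreg2 hper hσdiff hσpsd hσd hσdiag ha hbdd hsub
  refine le_antisymm (csSup_le ⟨_, 0, h0T, 0, 0, rfl⟩ ?_)
    (csSup_le_csSup ⟨B, ?_⟩ ⟨_, 0, 0, rfl⟩ fun _ ⟨x, v, hy⟩ => ⟨0, h0T, x, v, hy⟩)
  · rintro _ ⟨t, ht, x, v, rfl⟩
    refine le_of_forall_pos_le_add fun ε hε => ?_
    have hφ : 0 < Real.exp ((26 * C + 1) * t) * (1 + ‖v‖ ^ 2) := by positivity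
    have := hbarrier (ε / _) (div_pos hε hφ) t ht x v
    rw [mul_assoc, div_mul_cancel₀ _ hφ.ne'] at this
    linarith
  · rintro _ ⟨t, ht, x, v, rfl⟩
    exact hbdd t ht x v
end
end
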